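/- For every n ≥ 1, the center of the compact symplectic group Sp(n) consists of exactly the two elements 1 and −1 (the identity matrix and its negative); that is, Z(Sp(n)) = {1, −1}. -/

import Mathlib

/-- The compact symplectic group `Sp(n)`: the group of unitary `n × n` matrices over the
real quaternions, i.e. matrices `A` with `A * Aᴴ = 1`. -/
abbrev Sp (n : ℕ) : Type :=
  unitary (Matrix (Fin n) (Fin n) (Quaternion ℝ))

open Matrix Quaternion

noncomputable def qI : Quaternion ℝ := ⟨0,1,0,0⟩
noncomputable def qJ : Quaternion ℝ := ⟨0,0,1,0⟩

lemma qI_star_mul : star qI * qI = 1 := by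
  rw [Quaternion.star_mul_self]
  rw [Quaternion.normSq_def']
  norm_num [Quaternion.normSq_def', qI]

lemma qI_mul_star : qI * star qI = 1 := by
  rw [Quaternion.self_mul_star]
  rw [Quaternion.normSq_def']
  norm_num [Quaternion.normSq_def', qI]

lemma qJ_star_mul : star qJ * qJ = 1 := by
  rw [Quaternion.star_mul_self]
  rw [Quaternion.normSq_def']
  norm_num [Quaternion.normSq_def', qJ]

lemma qJ_mul_star : qJ * star qJ = 1 := by
  rw [Quaternion.self_mul_star]
  rw [Quaternion.normSq_def']
  norm_num [Quaternion.normSq_def', qJ]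

lemma qI_ne_one : qI ≠ 1 := by
  intro h
  have := congrArg QuaternionAlgebra.re h
  norm_num [qI] at this

lemma quat_real {x : Quaternion ℝ} (hI : x * qI = qI * x) (hJ : x * qJ = qJ * x) :
    x = (x.re : Quaternion ℝ) := by
  rw [Quaternion.ext_iff] at hI hJ ⊢
  simp [Quaternion.re_mul, Quaternion.imI_mul, Quaternion.imJ_mul,
    Quaternion.imK_mul] at hI hJ ⊢
  simp [qI, qJ] at hI hJ ⊢
  obtain ⟨h1, h2⟩ := hI
  obtain ⟨h3, h4⟩ := hJ
  refine ⟨?_, ?_, ?_⟩ <;> linarith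

-- diagonal unitary
lemma diag_mem (n : ℕ) (i : Fin n) (q : Quaternion ℝ) (h1 : star q * q = 1)
    (h2 : q * star q = 1) :
    (Matrix.diagonal (fun k => if k = i then q else 1) : Matrix (Fin n) (Fin n) (Quaternion ℝ))
      ∈ unitary _ := by
  have key : ∀ d : Fin n → Quaternion ℝ, (∀ k, d k = 1) → Matrix.diagonal d = 1 := by
    intro d hd
    rw [show d = fun _ => (1 : Quaternion ℝ) from funext hd, ← Matrix.diagonal_one]
  rw [Unitary.mem_iff, Matrix.star_eq_conjTranspose, Matrix.diagonal_conjTranspose,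
    Matrix.diagonal_mul_diagonal, Matrix.diagonal_mul_diagonal]
  refine ⟨?_, ?_⟩ <;>
  · apply key
    intro k
    by_cases h : k = i <;> simp [h, h1, h2]

-- swap unitary
lemma swap_mem (n : ℕ) (i j : Fin n) :
    ((Equiv.swap i j).toPEquiv.toMatrix : Matrix (Fin n) (Fin n) (Quaternion ℝ)) ∈ unitary _ := by
  have hsym : star ((Equiv.swap i j).toPEquiv.toMatrix : Matrix (Fin n) (Fin n) (Quaternion ℝ))
      = (Equiv.swap i j).toPEquiv.toMatrix := by
    refine Matrix.ext fun a b => ?_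
    rw [Matrix.star_eq_conjTranspose, Matrix.conjTranspose_apply]
    simp only [PEquiv.toMatrix_apply, Equiv.toPEquiv_apply, Option.mem_def, Option.some.injEq]
    have hiff : Equiv.swap i j b = a ↔ Equiv.swap i j a = b := by
      constructor <;> intro h <;> simp [← h, Equiv.swap_apply_self]
    split_ifs with h1 h2 h2 <;> simp_all
  have hSS : ((Equiv.swap i j).toPEquiv.toMatrix : Matrix (Fin n) (Fin n) (Quaternion ℝ)) *
      (Equiv.swap i j).toPEquiv.toMatrix = 1 := by
    rw [PEquiv.toMatrix_toPEquiv_mul]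
    refine Matrix.ext fun a b => ?_
    simp [Matrix.submatrix_apply, PEquiv.toMatrix_apply, Equiv.toPEquiv_apply, Matrix.one_apply,
      Equiv.swap_apply_self, eq_comm]
  rw [Unitary.mem_iff, hsym]
  exact ⟨hSS, hSS⟩


/-- For every `n ≥ 1`, the center of `Sp(n)` consists of exactly the identity matrix and
its negative: `Z(Sp(n)) = {1, -1}`. -/
theorem center_Sp_eq (n : ℕ) (hn : 1 ≤ n) :
    (Subgroup.center (Sp n) : Set (Sp n)) = {1, -1} := by
  ext a
  simp only [SetLike.mem_coe, Set.mem_insert_iff, Set.mem_singleton_iff]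
  constructor
  · intro ha
    rw [Subgroup.mem_center_iff] at ha
    set A : Matrix (Fin n) (Fin n) (Quaternion ℝ) := a.val with hAdef
    have hcomm : ∀ M : Matrix (Fin n) (Fin n) (Quaternion ℝ),
        (hM : M ∈ unitary _) → M * A = A * M := by
      intro M hM
      simpa using congrArg Subtype.val (ha ⟨M, hM⟩)
    have hentry : ∀ (i : Fin n) (q : Quaternion ℝ), star q * q = 1 → q * star q = 1 →
        ∀ j k : Fin n, (if j = i then q else 1) * A j k = A j k * (if k = i then q else 1) := by
      intro i q h1 h2 j k
      have hc := hcomm _ (diag_mem n i q h1 h2)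
      have h := congrFun (congrFun hc j) k
      simpa [Matrix.diagonal_mul, Matrix.mul_diagonal] using h
    have hoff : ∀ j k : Fin n, j ≠ k → A j k = 0 := by
      intro j k hjk
      have h := hentry j qI qI_star_mul qI_mul_star j k
      rw [if_pos rfl, if_neg (fun hkj => hjk hkj.symm), mul_one] at h
      have h0 : (qI - 1) * A j k = 0 := by rw [sub_mul, one_mul, h, sub_self]
      rcases mul_eq_zero.1 h0 with h' | h'
      · exact absurd (sub_eq_zero.1 h') qI_ne_one
      · exact h'
    have hreal : ∀ i : Fin n, A i i = ((A i i).re : Quaternion ℝ) := by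
      intro i
      have hI := hentry i qI qI_star_mul qI_mul_star i i
      have hJ := hentry i qJ qJ_star_mul qJ_mul_star i i
      rw [if_pos rfl] at hI hJ
      exact quat_real hI.symm hJ.symm
    have hdiageq : ∀ i j : Fin n, A i i = A j j := by
      intro i j
      have hc := hcomm _ (swap_mem n i j)
      rw [PEquiv.toMatrix_toPEquiv_mul, PEquiv.mul_toMatrix_toPEquiv] at hc
      have h := congrFun (congrFun hc i) j
      simpa [Matrix.submatrix_apply, Equiv.symm_swap, Equiv.swap_apply_left,
        Equiv.swap_apply_right] using h.symm
    set i0 : Fin n := ⟨0, hn⟩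
    set r : ℝ := (A i0 i0).re with hr
    have hAc : A = Matrix.diagonal (fun _ => (r : Quaternion ℝ)) := by
      refine Matrix.ext fun j k => ?_
      by_cases h : j = k
      · subst h
        rw [Matrix.diagonal_apply_eq]
        rw [hdiageq j i0]
        exact hreal i0
      · rw [hoff j k h, Matrix.diagonal_apply_ne _ h]
    have hu := a.prop
    rw [Unitary.mem_iff] at hu
    have hu1 := hu.1
    rw [← hAdef, hAc, Matrix.star_eq_conjTranspose, Matrix.diagonal_conjTranspose,
      Matrix.diagonal_mul_diagonal] at hu1
    have h11 := congrFun (congrFun hu1 i0) i0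
    rw [Matrix.diagonal_apply_eq, Matrix.one_apply_eq] at h11
    have hr2 : r * r = 1 := by
      have : ((r * r : ℝ) : Quaternion ℝ) = ((1 : ℝ) : Quaternion ℝ) := by
        rw [Quaternion.coe_mul]
        simpa [Quaternion.star_coe] using h11
      exact Quaternion.coe_injective this
    rcases mul_self_eq_one_iff.1 hr2 with h | h
    · left
      apply Subtype.ext
      show A = 1
      rw [hAc, h]
      simp
    · right
      apply Subtype.ext
      show A = (-1 : Sp n).val
      rw [hAc, h]
      have : (-1 : Sp n).val = (-1 : Matrix (Fin n) (Fin n) (Quaternion ℝ)) := by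
        rw [Unitary.coe_neg]
        norm_num
      rw [this]
      refine Matrix.ext fun p q => ?_
      by_cases hpq : p = q
      · subst hpq; simp
      · simp [Matrix.diagonal_apply_ne _ hpq, Matrix.one_apply_ne hpq]
  · rintro (rfl | rfl)
    · exact Subgroup.one_mem _
    · rw [Subgroup.mem_center_iff]
      intro g
      rw [mul_neg_one, neg_one_mul]
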